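/- Let P = ⟨V,H,M,T⟩ be an abduction instance and let S ⊆ H. Then S is a subset-minimal solution to P if and only if S is a solution to P and for every h ∈ S, the CNF formula T ∪ (S \ {h}) ∪ {C_M} is consistent, where C_M is the single clause {¬m : m ∈ M}. -/

import Mathlib

/-!
Solutions are convex under inclusion, so `S` is minimal as soon as no `S \ {h}` is a solution;
given that `S` is one, `S \ {h}` is a solution exactly when it entails `M`. A model of
`T ∪ (S \ {h})` that witnesses non-entailment sets some `m ∈ M` to 0, i.e. satisfies `C_M`,
and conversely a satisfying assignment of `T ∪ (S \ {h}) ∪ {C_M}`, with its domain enlarged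
to cover `var(T) ∪ M`, is such a model.
-/

/-- Propositional variables. -/
abbrev Var := ℕ

/-- A literal: a variable together with a polarity (`true` = positive). -/
abbrev Lit := Var × Bool

/-- A clause is a finite set of literals. -/
abbrev Clause := Finset Lit

/-- A CNF formula is a finite set of clauses. -/
abbrev CNF := Finset Clause

/-- A partial truth assignment: a finite domain together with a valuation. -/
structure PAssign where
  dom : Finset Var
  val : Var → Bool

/-- Value of a literal under an assignment. -/
def litVal (τ : PAssign) (l : Lit) : Bool := if l.2 then τ.val l.1 else !(τ.val l.1)

/-- A clause is tautological if it contains a variable and its negation. -/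
def Tautological (C : Clause) : Prop := ∃ x : Var, (x, true) ∈ C ∧ (x, false) ∈ C

/-- An assignment satisfies a clause: tautological clauses are satisfied by every
assignment; a non-tautological clause is satisfied if some literal (whose variable is
in the domain) is set to 1. -/
def SatClause (τ : PAssign) (C : Clause) : Prop :=
  Tautological C ∨ ∃ l ∈ C, l.1 ∈ τ.dom ∧ litVal τ l = true

/-- An assignment satisfies a CNF formula if it satisfies every clause. -/
def Satisfies (τ : PAssign) (φ : CNF) : Prop := ∀ C ∈ φ, SatClause τ C

/-- A CNF formula is consistent (satisfiable) if some assignment satisfies it. -/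
def Consistent (φ : CNF) : Prop := ∃ τ : PAssign, Satisfies τ φ

/-- Variables of a clause. -/
def clauseVars (C : Clause) : Finset Var := C.image Prod.fst

/-- Variables of a CNF formula. -/
def cnfVars (φ : CNF) : Finset Var := φ.biUnion clauseVars

/-- A model of φ is a satisfying assignment whose domain contains var(φ). -/
def IsModel (τ : PAssign) (φ : CNF) : Prop := Satisfies τ φ ∧ cnfVars φ ⊆ τ.dom

/-- φ entails ψ if every model of φ whose domain contains var(ψ) is a model of ψ. -/
def Entails (φ ψ : CNF) : Prop :=
  ∀ τ : PAssign, IsModel τ φ → cnfVars ψ ⊆ τ.dom → IsModel τ ψ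

open Classical in
/-- The truth assignment reduct φ[τ]: delete all clauses satisfied by τ and delete from
the remaining clauses all literals set to 0 by τ. -/
noncomputable def reduct (φ : CNF) (τ : PAssign) : CNF :=
  (φ.filter (fun C => ¬ SatClause τ C)).image
    (fun C => C.filter (fun l => ¬ (l.1 ∈ τ.dom ∧ litVal τ l = false)))

/-- τ ∈ 2^{B,S}: τ has domain B and sets every s ∈ S ∩ B to 1. -/
def InTA (τ : PAssign) (B S : Finset Var) : Prop :=
  τ.dom = B ∧ ∀ s ∈ S, s ∈ B → τ.val s = true

/-- A finite set of variables used as a CNF formula: the set of positive unit clauses. -/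
def unitCNF (X : Finset Var) : CNF := X.image (fun x => ({(x, true)} : Clause))

/-- An abduction instance ⟨V,H,M,T⟩. -/
structure AbdInst where
  V : Finset Var
  H : Finset Var
  M : Finset Var
  T : CNF
  hH : H ⊆ V
  hM : M ⊆ V
  hHM : Disjoint H M
  hT : cnfVars T ⊆ V

/-- S ⊆ H is a solution to ⟨V,H,M,T⟩ if T ∪ S is consistent and T ∪ S ⊨ M. -/
def Solution (P : AbdInst) (S : Finset Var) : Prop :=
  S ⊆ P.H ∧ Consistent (P.T ∪ unitCNF S) ∧ Entails (P.T ∪ unitCNF S) (unitCNF P.M)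

/-- A solution is subset-minimal if no proper subset is a solution. -/
def MinimalSolution (P : AbdInst) (S : Finset Var) : Prop :=
  Solution P S ∧ ∀ S' : Finset Var, S' ⊂ S → ¬ Solution P S'

/-- Horn formulas: at most one positive literal per clause. -/
def IsHorn (φ : CNF) : Prop := ∀ C ∈ φ, (C.filter (fun l => l.2 = true)).card ≤ 1

/-- Krom formulas: at most two literals per clause. -/
def IsKrom (φ : CNF) : Prop := ∀ C ∈ φ, C.card ≤ 2

/-- B is a strong backdoor set of φ into the class `cls` if φ[τ] ∈ cls for every
assignment τ with domain B. -/
def StrongBackdoor (cls : CNF → Prop) (φ : CNF) (B : Finset Var) : Prop :=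
  ∀ τ : PAssign, τ.dom = B → cls (reduct φ τ)

/-- The total assignment over V setting exactly the variables of U to 1. -/
def assignOf (V U : Finset Var) : PAssign := ⟨V, fun x => decide (x ∈ U)⟩

/-- U (⊆ V, viewed as a total assignment over V) is the least model of φ over V. -/
def IsLeastModel (φ : CNF) (V U : Finset Var) : Prop :=
  U ⊆ V ∧ Satisfies (assignOf V U) φ ∧
    ∀ U' ⊆ V, Satisfies (assignOf V U') φ → U ⊆ U'

/-- Membership in Res(φ): the closure of φ under resolution, dropping tautological
clauses. -/
inductive ResMem (φ : CNF) : Clause → Prop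
  | base {C : Clause} : C ∈ φ → ¬ Tautological C → ResMem φ C
  | resolve {C D : Clause} {x : Var} :
      ResMem φ (insert (x, true) C) → ResMem φ (insert (x, false) D) →
      ¬ Tautological (C ∪ D) → ResMem φ (C ∪ D)

/-- Membership in TrimRes(T,H,M): clauses of Res(T) over variables in H ∪ M; if the
empty clause is derivable then TrimRes(T,H,M) = {□}. -/
def InTrimRes (T : CNF) (H M : Finset Var) (C : Clause) : Prop :=
  (ResMem T (∅ : Clause) ∧ C = ∅) ∨
    (¬ ResMem T (∅ : Clause) ∧ ResMem T C ∧ ∀ l ∈ C, l.1 ∈ H ∪ M)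

/-- A Horn clause is definite if it has exactly one positive literal. -/
def IsDefinite (C : Clause) : Prop := (C.filter (fun l => l.2 = true)).card = 1

/-- A clause is purely negative (a constraint) if it has no positive literal. -/
def PurelyNegative (C : Clause) : Prop := ∀ l ∈ C, l.2 = false

/-- Heads of a clause: variables occurring positively. -/
def headSet (C : Clause) : Finset Var := (C.filter (fun l => l.2 = true)).image Prod.fst

/-- Body of a clause: variables occurring negatively. -/
def bodySet (C : Clause) : Finset Var := (C.filter (fun l => l.2 = false)).image Prod.fst

/-- One step of the least-model computation for definite clauses:
U ↦ U ∪ {head(C) : C ∈ D, body(C) ⊆ U}. -/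
def hornStep (D : CNF) (U : Finset Var) : Finset Var :=
  U ∪ D.biUnion (fun C => if bodySet C ⊆ U then headSet C else ∅)

/-- Size of a CNF formula. -/
def cnfSize (F : CNF) : ℕ := ∑ C ∈ F, (C.card + 1)

/-- Size of an abduction instance. -/
def instSize (P : AbdInst) : ℕ := P.V.card + P.H.card + P.M.card + ∑ C ∈ P.T, C.card

lemma satClause_singleton_pos_iff {τ : PAssign} {x : Var} :
    SatClause τ {(x, true)} ↔ x ∈ τ.dom ∧ τ.val x = true := by
  simp [SatClause, Tautological, litVal]

lemma satisfies_unitCNF_iff {τ : PAssign} {X : Finset Var} :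
    Satisfies τ (unitCNF X) ↔ ∀ x ∈ X, x ∈ τ.dom ∧ τ.val x = true := by
  simp [Satisfies, unitCNF, satClause_singleton_pos_iff]

lemma satClause_negClause_iff {τ : PAssign} {M : Finset Var} :
    SatClause τ (M.image fun m => ((m, false) : Lit)) ↔
      ∃ m ∈ M, m ∈ τ.dom ∧ τ.val m = false := by
  simp [SatClause, Tautological, litVal]

lemma satisfies_union_singleton_iff {τ : PAssign} {φ : CNF} {C : Clause} :
    Satisfies τ (φ ∪ {C}) ↔ Satisfies τ φ ∧ SatClause τ C := by
  simp [Satisfies, or_imp, forall_and, and_comm]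

lemma Satisfies.mono {τ : PAssign} {φ ψ : CNF} (hτ : Satisfies τ φ) (h : ψ ⊆ φ) :
    Satisfies τ ψ := fun C hC => hτ C (h hC)

lemma Consistent.mono {φ ψ : CNF} (hφ : Consistent φ) (h : ψ ⊆ φ) : Consistent ψ :=
  hφ.imp fun _ hτ => hτ.mono h

lemma cnfVars_mono {φ ψ : CNF} (h : ψ ⊆ φ) : cnfVars ψ ⊆ cnfVars φ :=
  Finset.biUnion_subset_biUnion_of_subset_left _ h

lemma Entails.mono_left {φ φ' ψ : CNF} (he : Entails φ ψ) (h : φ ⊆ φ') : Entails φ' ψ :=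
  fun τ hm hv => he τ ⟨hm.1.mono h, (cnfVars_mono h).trans hm.2⟩ hv

lemma unitCNF_mono {A B : Finset Var} (h : A ⊆ B) : unitCNF A ⊆ unitCNF B :=
  Finset.image_subset_image h

lemma cnfVars_unitCNF (X : Finset Var) : cnfVars (unitCNF X) = X := by
  ext x
  simp [cnfVars, unitCNF, clauseVars]

lemma Satisfies.extendDom {τ : PAssign} {φ : CNF} (hτ : Satisfies τ φ) (X : Finset Var) :
    Satisfies ⟨τ.dom ∪ X, τ.val⟩ φ := by
  intro C hC
  rcases hτ C hC with htaut | ⟨l, hl, hld, hlv⟩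
  · exact Or.inl htaut
  · exact Or.inr ⟨l, hl, Finset.mem_union_left _ hld, hlv⟩

theorem consistent_union_negClause_iff_not_entails (φ : CNF) (M : Finset Var) :
    Consistent (φ ∪ {M.image fun m => ((m, false) : Lit)}) ↔ ¬ Entails φ (unitCNF M) := by
  simp only [Consistent, satisfies_union_singleton_iff, satClause_negClause_iff]
  constructor
  · rintro ⟨τ, hφ, m, hmM, -, hm⟩ hent
    -- extend τ to a model of φ covering M; it still sets m to 0
    have hmodel := hent ⟨τ.dom ∪ (cnfVars φ ∪ M), τ.val⟩
      ⟨hφ.extendDom _, fun x hx => by simp [hx]⟩ (fun x hx => by simp_all [cnfVars_unitCNF])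
    have := (satisfies_unitCNF_iff.mp hmodel.1 m hmM).2
    simp_all
  · intro hne
    simp only [Entails, IsModel, cnfVars_unitCNF, satisfies_unitCNF_iff, not_forall] at hne
    obtain ⟨τ, ⟨hφ, -⟩, hMdom, hfalse⟩ := hne
    obtain ⟨m, hmM, hm⟩ : ∃ m ∈ M, m ∈ τ.dom → τ.val m = false := by
      by_contra! h
      exact hfalse ⟨fun m hm => ⟨(h m hm).1, by simpa using (h m hm).2⟩, hMdom⟩
    exact ⟨τ, hφ, m, hmM, hMdom hmM, by simpa using hm (hMdom hmM)⟩

/-- Consistency passes down to fewer hypotheses and entailment up to more. -/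
lemma Solution.of_subset_of_subset {P : AbdInst} {S S' S'' : Finset Var}
    (hS : Solution P S) (hS' : Solution P S') (h₁ : S' ⊆ S'') (h₂ : S'' ⊆ S) :
    Solution P S'' :=
  ⟨h₂.trans hS.1, hS.2.1.mono (Finset.union_subset_union_right (unitCNF_mono h₂)),
    hS'.2.2.mono_left (Finset.union_subset_union_right (unitCNF_mono h₁))⟩

lemma minimalSolution_iff_forall_erase {P : AbdInst} {S : Finset Var} :
    MinimalSolution P S ↔ Solution P S ∧ ∀ h ∈ S, ¬ Solution P (S.erase h) := by
  refine and_congr_right fun hS => ⟨fun hmin h hh => hmin _ (Finset.erase_ssubset hh), ?_⟩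
  intro herase S' hS'S hS'
  obtain ⟨h, hhS, hhS'⟩ := Finset.exists_of_ssubset hS'S
  exact herase h hhS <|
    hS.of_subset_of_subset hS' (Finset.subset_erase.mpr ⟨hS'S.1, hhS'⟩) (Finset.erase_subset _ _)

lemma Solution.erase_iff {P : AbdInst} {S : Finset Var} (hS : Solution P S) (h : Var) :
    Solution P (S.erase h) ↔ Entails (P.T ∪ unitCNF (S.erase h)) (unitCNF P.M) :=
  ⟨fun hS' => hS'.2.2, fun he => ⟨(Finset.erase_subset _ _).trans hS.1,
    hS.2.1.mono (Finset.union_subset_union_right (unitCNF_mono (Finset.erase_subset _ _))), he⟩⟩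

theorem stmt_14_general (P : AbdInst) (S : Finset Var) :
    MinimalSolution P S ↔
      (Solution P S ∧
        ∀ h ∈ S,
          Consistent (P.T ∪ unitCNF (S.erase h) ∪
            {P.M.image (fun m => ((m, false) : Lit))}) ) := by
  rw [minimalSolution_iff_forall_erase]
  refine and_congr_right fun hS => forall₂_congr fun h _ => ?_
  rw [hS.erase_iff, consistent_union_negClause_iff_not_entails]

/-- S ⊆ H is a subset-minimal solution iff S is a solution and for every h ∈ S the
formula T ∪ (S \ {h}) ∪ {C_M} is consistent, where C_M = {¬m : m ∈ M}. -/
theorem stmt_14 (P : AbdInst) (S : Finset Var) (hS : S ⊆ P.H) :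
    MinimalSolution P S ↔
      (Solution P S ∧
        ∀ h ∈ S,
          Consistent (P.T ∪ unitCNF (S.erase h) ∪
            {P.M.image (fun m => ((m, false) : Lit))}) ) :=
  stmt_14_general P S
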